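/- Let A be a stochastic n×n matrix with every entry at least ε > 0, and let x, y ∈ ℝ^n with y ≤ A·x entrywise. Then min_j y_j ≥ min_j x_j is not guaranteed, but max_j y_j ≤ max_j x_j - ε·(max_j x_j - min_j x_j), i.e., the maximum decreases by at least ε times the spread of x. -/

import Mathlib

open Matrix Finset Filter Topology

def Stochastic {n : ℕ} (W : Matrix (Fin n) (Fin n) ℝ) : Prop :=
  (∀ i j, 0 ≤ W i j) ∧ ∀ i, ∑ j, W i j = 1

noncomputable def vmax {n : ℕ} (hn : 0 < n) (x : Fin n → ℝ) : ℝ :=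
  Finset.univ.sup' ⟨⟨0, hn⟩, Finset.mem_univ _⟩ x

noncomputable def vmin {n : ℕ} (hn : 0 < n) (x : Fin n → ℝ) : ℝ :=
  Finset.univ.inf' ⟨⟨0, hn⟩, Finset.mem_univ _⟩ x

def Phi {n : ℕ} (W : ℕ → Matrix (Fin n) (Fin n) ℝ) (k : ℕ) : ℕ → Matrix (Fin n) (Fin n) ℝ
  | 0 => 1
  | j + 1 => W (k + j) * Phi W k j

theorem sum_mul_le_sub_mul_of_le_weight {ι : Type*} [Fintype ι] {w x : ι → ℝ}
    (hw : ∀ j, 0 ≤ w j) (hw₁ : ∑ j, w j = 1) {M : ℝ} (hxM : ∀ j, x j ≤ M)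
    (j₀ : ι) {ε : ℝ} (hε : ε ≤ w j₀) :
    ∑ j, w j * x j ≤ M - ε * (M - x j₀) := by
  have hdefect : ∑ j, w j * (M - x j) = M - ∑ j, w j * x j := by
    simp only [mul_sub, sum_sub_distrib, ← sum_mul, hw₁, one_mul]
  have hsingle : w j₀ * (M - x j₀) ≤ ∑ j, w j * (M - x j) :=
    single_le_sum (f := fun j ↦ w j * (M - x j))
      (fun j _ ↦ mul_nonneg (hw j) (sub_nonneg.2 (hxM j))) (mem_univ j₀)
  have hε_gap : ε * (M - x j₀) ≤ w j₀ * (M - x j₀) :=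
    mul_le_mul_of_nonneg_right hε (sub_nonneg.2 (hxM j₀))
  linarith

section VmaxVmin

variable {n : ℕ} (hn : 0 < n) (x : Fin n → ℝ)

theorem le_vmax (j : Fin n) : x j ≤ vmax hn x :=
  le_sup' x (mem_univ j)

theorem exists_eq_vmin : ∃ j, x j = vmin hn x := by
  obtain ⟨j, -, hj⟩ := exists_mem_eq_inf' ⟨⟨0, hn⟩, mem_univ _⟩ x
  exact ⟨j, hj.symm⟩

theorem vmax_le {c : ℝ} (h : ∀ j, x j ≤ c) : vmax hn x ≤ c :=
  sup'_le _ _ fun j _ ↦ h j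

end VmaxVmin

theorem stmt19_general {n : ℕ} (hn : 0 < n) (A : Matrix (Fin n) (Fin n) ℝ)
    (hA : Stochastic A) (ε : ℝ) (hAe : ∀ i j, ε ≤ A i j)
    (x y : Fin n → ℝ) (hy : y ≤ A.mulVec x) :
    vmax hn y ≤ vmax hn x - ε * (vmax hn x - vmin hn x) := by
  obtain ⟨j₀, hj₀⟩ := exists_eq_vmin hn x
  refine vmax_le hn y fun i ↦ (hy i).trans ?_
  rw [← hj₀]
  exact sum_mul_le_sub_mul_of_le_weight (hA.1 i) (hA.2 i) (le_vmax hn x) j₀ (hAe i j₀)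

theorem stmt19 {n : ℕ} (hn : 0 < n) (A : Matrix (Fin n) (Fin n) ℝ)
    (hA : Stochastic A) (ε : ℝ) (hε : 0 < ε) (hAe : ∀ i j, ε ≤ A i j)
    (x y : Fin n → ℝ) (hy : y ≤ A.mulVec x) :
    vmax hn y ≤ vmax hn x - ε * (vmax hn x - vmin hn x) :=
  stmt19_general hn A hA ε hAe x y hy
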